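/- Let a : S → ℂ^M be a family of vectors indexed by a measure space (S, μ), and define R = ∫_S f(s) a(s) a(s)^H dμ(s) and R̄ = ∫_S f̄(s) a(s) a(s)^H dμ(s), where f, f̄ : S → ℝ≥0 are integrable and the support of f is contained in the support of f̄, with f ≤ C·f̄ for some constant C > 0. Then the column space of R is contained in the column space of R̄. -/

import Mathlib

/-!
`R`, `R̄` and `C • R̄ - R` are entrywise integrals of the outer products `a(s) a(s)ᴴ` against the
weights `f`, `f̄` and `C f̄ - f`. Outer products are positive semidefinite and the quadratic form
commutes with the integral, so `R` and `C • R̄ - R` are positive semidefinite (`0 ≤ R ≤ C • R̄` in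
the Loewner order) and `R̄` is Hermitian. If `R̄ x = 0` then `0 ≤ xᴴ R x ≤ C xᴴ R̄ x = 0`, hence
`R x = 0`: `ker R̄ ⊆ ker R`. For Hermitian matrices the range is the orthogonal complement of the
kernel, so `range R ⊆ range R̄`.
-/

open Matrix MeasureTheory
open scoped ComplexOrder MatrixOrder

theorem LinearMap.IsSymmetric.range_le_range_of_ker_le {𝕜 E : Type*} [RCLike 𝕜]
    [NormedAddCommGroup E] [InnerProductSpace 𝕜 E] [FiniteDimensional 𝕜 E]
    {S T : E →ₗ[𝕜] E} (hS : S.IsSymmetric) (hT : T.IsSymmetric) (h : ker T ≤ ker S) :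
    range S ≤ range T := by
  rw [← hS.adjoint_eq, ← hT.adjoint_eq, ← orthogonal_ker, ← orthogonal_ker]
  exact Submodule.orthogonal_le h

theorem integrable_ofReal_mul_mul_star {S 𝕜 n : Type*} [MeasurableSpace S] {μ : Measure S}
    [RCLike 𝕜] {w : S → ℝ} (hw : Integrable w μ) {a : S → n → 𝕜}
    (ha : ∀ i, AEStronglyMeasurable (fun s ↦ a s i) μ) {B : ℝ} (hB : ∀ s i, ‖a s i‖ ≤ B)
    (i j : n) : Integrable (fun s ↦ (w s : 𝕜) * (a s i * star (a s j))) μ := by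
  refine hw.ofReal.mul_bdd (c := B * B) ((ha i).mul (ha j).star) (ae_of_all _ fun s ↦ ?_)
  rw [norm_mul, norm_star]
  exact mul_le_mul (hB s i) (hB s j) (norm_nonneg _) ((norm_nonneg _).trans (hB s i))

namespace Matrix

section EntrywiseIntegral

variable {S 𝕜 n : Type*} [MeasurableSpace S] {μ : Measure S} [RCLike 𝕜]
  {F : S → Matrix n n 𝕜} {T : Matrix n n 𝕜}

theorem isHermitian_of_forall_eq_integral (hF : ∀ s, (F s).IsHermitian)
    (hT : ∀ i j, T i j = ∫ s, F s i j ∂μ) : T.IsHermitian := by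
  ext i j
  rw [conjTranspose_apply, hT, hT, RCLike.star_def, ← integral_conj]
  simp only [← RCLike.star_def, (hF _).apply]

variable [Fintype n]

theorem dotProduct_mulVec_eq_integral (hFi : ∀ i j, Integrable (fun s ↦ F s i j) μ)
    (hT : ∀ i j, T i j = ∫ s, F s i j ∂μ) (v x : n → 𝕜) :
    v ⬝ᵥ T *ᵥ x = ∫ s, v ⬝ᵥ F s *ᵥ x ∂μ := by
  have hint (i j : n) : Integrable (fun s ↦ v i * (F s i j * x j)) μ :=
    ((hFi i j).mul_const _).const_mul _
  simp only [dotProduct, mulVec, hT, ← integral_mul_const, Finset.mul_sum, ← integral_const_mul]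
  rw [integral_finsetSum _ fun i _ ↦ integrable_finsetSum _ fun j _ ↦ hint i j]
  exact Finset.sum_congr rfl fun i _ ↦ (integral_finsetSum _ fun j _ ↦ hint i j).symm

theorem posSemidef_of_forall_eq_integral (hF : ∀ s, (F s).PosSemidef)
    (hFi : ∀ i j, Integrable (fun s ↦ F s i j) μ) (hT : ∀ i j, T i j = ∫ s, F s i j ∂μ) :
    T.PosSemidef := by
  refine .of_dotProduct_mulVec_nonneg (isHermitian_of_forall_eq_integral
    (fun s ↦ (hF s).isHermitian) hT) fun x ↦ ?_
  rw [dotProduct_mulVec_eq_integral hFi hT]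
  exact integral_nonneg fun s ↦ (hF s).dotProduct_mulVec_nonneg x

end EntrywiseIntegral

variable {𝕜 n : Type*} [RCLike 𝕜] [Fintype n] {A B : Matrix n n 𝕜}

theorem IsHermitian.range_mulVecLin_le_of_ker_le (hA : A.IsHermitian) (hB : B.IsHermitian)
    (h : LinearMap.ker B.mulVecLin ≤ LinearMap.ker A.mulVecLin) :
    LinearMap.range A.mulVecLin ≤ LinearMap.range B.mulVecLin := by
  classical
  have hEuc : LinearMap.range A.toEuclideanLin ≤ LinearMap.range B.toEuclideanLin :=
    (isSymmetric_toEuclideanLin_iff.2 hA).range_le_range_of_ker_le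
      (isSymmetric_toEuclideanLin_iff.2 hB) fun x hx ↦ by
        simpa [toLpLin_apply] using h (by simpa [toLpLin_apply] using hx)
  rintro _ ⟨x, rfl⟩
  obtain ⟨y, hy⟩ := hEuc ⟨WithLp.toLp 2 x, rfl⟩
  exact ⟨y.ofLp, by simpa [toLpLin_apply] using congrArg WithLp.ofLp hy⟩

theorem ker_mulVecLin_le_of_le_smul (hA : 0 ≤ A) {c : ℝ} (hAB : A ≤ c • B) :
    LinearMap.ker B.mulVecLin ≤ LinearMap.ker A.mulVecLin := by
  intro x hx
  rw [LinearMap.mem_ker, mulVecLin_apply] at hx ⊢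
  rw [← hA.posSemidef.dotProduct_mulVec_zero_iff]
  have h := (le_iff.1 hAB).dotProduct_mulVec_nonneg x
  rw [sub_mulVec, smul_mulVec, hx, smul_zero, zero_sub, dotProduct_neg, neg_nonneg] at h
  exact le_antisymm h (hA.posSemidef.dotProduct_mulVec_nonneg x)

theorem range_mulVecLin_le_of_le_smul (hA : 0 ≤ A) (hB : B.IsHermitian) {c : ℝ}
    (hAB : A ≤ c • B) : LinearMap.range A.mulVecLin ≤ LinearMap.range B.mulVecLin :=
  hA.posSemidef.isHermitian.range_mulVecLin_le_of_ker_le hB (ker_mulVecLin_le_of_le_smul hA hAB)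

end Matrix

theorem stmt_5_general {M : ℕ} {S : Type*} [MeasurableSpace S] (μ : Measure S)
    (a : S → Fin M → ℂ) (f fbar : S → ℝ) (C : ℝ)
    (ha_meas : ∀ i, Measurable fun s => a s i)
    (ha_bdd : ∃ B : ℝ, ∀ s i, ‖a s i‖ ≤ B)
    (hf_nonneg : ∀ s, 0 ≤ f s)
    (hf_int : Integrable f μ) (hfbar_int : Integrable fbar μ)
    (hdom : ∀ s, f s ≤ C * fbar s)
    (R Rbar : Matrix (Fin M) (Fin M) ℂ)
    (hR : ∀ i j, R i j = ∫ s, (f s : ℂ) * (a s i * star (a s j)) ∂μ)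
    (hRbar : ∀ i j, Rbar i j = ∫ s, (fbar s : ℂ) * (a s i * star (a s j)) ∂μ) :
    LinearMap.range R.mulVecLin ≤ LinearMap.range Rbar.mulVecLin := by
  obtain ⟨B, hB⟩ := ha_bdd
  have hint {w : S → ℝ} (hw : Integrable w μ) (i j : Fin M) :
      Integrable (fun s ↦ (w s : ℂ) * (a s i * star (a s j))) μ :=
    integrable_ofReal_mul_mul_star hw (fun i ↦ (ha_meas i).aestronglyMeasurable) hB i j
  have hgram {w : S → ℝ} (hw : 0 ≤ w) :
      ∀ s, ((w s : ℂ) • vecMulVec (a s) (star (a s))).PosSemidef := fun s ↦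
    (posSemidef_vecMulVec_self_star _).smul (RCLike.ofReal_nonneg.2 (hw s))
  have hR_nonneg : 0 ≤ R :=
    (posSemidef_of_forall_eq_integral (hgram hf_nonneg) (hint hf_int) hR).nonneg
  have hRbar_herm : Rbar.IsHermitian := isHermitian_of_forall_eq_integral
    (fun s ↦ (posSemidef_vecMulVec_self_star _).isHermitian.smul (Complex.conj_ofReal _)) hRbar
  have hdiff (i j : Fin M) : (C • Rbar - R) i j
      = ∫ s, ((C * fbar s - f s : ℝ) : ℂ) * (a s i * star (a s j)) ∂μ := by
    rw [Matrix.sub_apply, Matrix.smul_apply, Complex.real_smul, hR, hRbar, ← integral_const_mul,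
      ← integral_sub ((hint hfbar_int i j).const_mul _) (hint hf_int i j)]
    congr 1 with s
    push_cast
    ring
  have hle : R ≤ C • Rbar := le_iff.2 <| posSemidef_of_forall_eq_integral
    (hgram fun s ↦ sub_nonneg.2 (hdom s)) (hint ((hfbar_int.const_mul C).sub hf_int)) hdiff
  exact range_mulVecLin_le_of_le_smul hR_nonneg hRbar_herm hle

theorem stmt_5 {M : ℕ} {S : Type*} [MeasurableSpace S] (μ : Measure S)
    (a : S → Fin M → ℂ) (f fbar : S → ℝ) (C : ℝ) (hC : 0 < C)
    (ha_meas : ∀ i, Measurable fun s => a s i)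
    (ha_bdd : ∃ B : ℝ, ∀ s i, ‖a s i‖ ≤ B)
    (hf_nonneg : ∀ s, 0 ≤ f s) (hfbar_nonneg : ∀ s, 0 ≤ fbar s)
    (hf_int : Integrable f μ) (hfbar_int : Integrable fbar μ)
    (hdom : ∀ s, f s ≤ C * fbar s)
    (R Rbar : Matrix (Fin M) (Fin M) ℂ)
    (hR : ∀ i j, R i j = ∫ s, (f s : ℂ) * (a s i * star (a s j)) ∂μ)
    (hRbar : ∀ i j, Rbar i j = ∫ s, (fbar s : ℂ) * (a s i * star (a s j)) ∂μ) :
    LinearMap.range R.mulVecLin ≤ LinearMap.range Rbar.mulVecLin :=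
  stmt_5_general μ a f fbar C ha_meas ha_bdd hf_nonneg hf_int hfbar_int hdom R Rbar hR hRbar
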